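/- Let u be a fixed point of a primitive morphism σ on a finite alphabet A belonging to class P, i.e., there is a palindrome p and palindromes q_a with σ(a) = p q_a for all a ∈ A (or σ(a) = q_a p for all a). Then there exist a primitive morphism τ on A belonging to class P in which the palindrome p' occurring in the class-P decomposition has length 0 or 1, and an infinite sequence v with τ(v) = v, such that v has exactly the same set of factors as u; moreover τ can be chosen with either the form a → p' q'_a for all a, or the form a → q'_a p' for all a. -/

import Mathlib

namespace PalPaper

variable {α : Type*}

/-- The finite word `u i, u (i+1), …, u (i+k-1)` read off the infinite sequence `u`. -/
def factorAt (u : ℕ → α) (i k : ℕ) : List α :=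
  (List.range k).map fun j => u (i + j)

/-- `w` occurs as a contiguous block (factor) in the infinite sequence `u`. -/
def IsFactor (u : ℕ → α) (w : List α) : Prop :=
  ∃ i, w = factorAt u i w.length

/-- A palindrome is a word equal to its reversal. -/
def IsPalindrome (w : List α) : Prop := w.reverse = w

/-- Number of distinct factors of length `k` of `u`. -/
noncomputable def facComplexity (u : ℕ → α) (k : ℕ) : ℕ :=
  Set.ncard {w : List α | w.length = k ∧ IsFactor u w}

/-- Number of distinct palindromic factors of length `k` of `u`. -/
noncomputable def palComplexity (u : ℕ → α) (k : ℕ) : ℕ :=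
  Set.ncard {w : List α | w.length = k ∧ IsFactor u w ∧ IsPalindrome w}

/-- `p ≥ 1` is a period of the finite word `w`. -/
def IsPeriodOf (p : ℕ) (w : List α) : Prop :=
  1 ≤ p ∧ ∀ i (h : i + p < w.length), w[i]'(by omega) = w[i + p]'h

/-- The minimal period of a finite word. -/
noncomputable def minPeriod (w : List α) : ℕ := sInf {p | IsPeriodOf p w}

/-- The prefix of length `m` of the infinite sequence `u`, as a finite word. -/
def seqPrefix (u : ℕ → α) (m : ℕ) : List α := (List.range m).map u

/-- The word `σ(u 0) σ(u 1) ⋯ σ(u (n-1))`. -/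
def substPrefix (σ : α → List α) (u : ℕ → α) (n : ℕ) : List α :=
  (List.range n).flatMap fun i => σ (u i)

/-- `v = σ(u)`: every word `σ(u 0) ⋯ σ(u (n-1))` is the corresponding prefix of `v`. -/
def IsMorphicImage (σ : α → List α) (u v : ℕ → α) : Prop :=
  ∀ n, substPrefix σ u n = seqPrefix v (substPrefix σ u n).length

/-- `u` is a fixed point of the morphism `σ`, i.e. `σ(u) = u`. -/
def IsFixedPointOf (σ : α → List α) (u : ℕ → α) : Prop := IsMorphicImage σ u u

/-- The `k`-th iterate of a morphism, applied to a letter. -/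
def morphIter (σ : α → List α) : ℕ → α → List α
  | 0, a => [a]
  | k + 1, a => (σ a).flatMap (morphIter σ k)

/-- A morphism is primitive if some iterate maps every letter to a word
containing every letter. -/
def IsPrimitive (σ : α → List α) : Prop :=
  ∃ k, 1 ≤ k ∧ ∀ a b : α, b ∈ morphIter σ k a

/-- A morphism belongs to class P: `σ a = p ++ q a` for all `a` (or
`σ a = q a ++ p` for all `a`) with `p` and all the `q a` palindromes. -/
def ClassP (σ : α → List α) : Prop :=
  ∃ p : List α, IsPalindrome p ∧
    ((∀ a, ∃ qa, IsPalindrome qa ∧ σ a = p ++ qa) ∨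
     (∀ a, ∃ qa, IsPalindrome qa ∧ σ a = qa ++ p))

/-!
If `z ++ B a = A a ++ z` for every letter `a`, then `A` and `B` use the same letters, so one is
primitive iff the other is, and their iterates are again conjugate. An image `Bⁿ a` then sits
inside `Aⁿ (a :: y)` and `Aⁿ a` inside `Bⁿ (x ++ [a])` once the contexts `x`, `y` are long; as
every letter occurs in a primitive fixed point with long contexts, fixed points of conjugate
primitive morphisms have the same factors.

For `σ a = p ++ q a` with `p ≠ []`, each `σ² a ++ Z` with `Z = σ(p) ++ p` is a palindrome, and
so is `Z`, of length at least two. Write `Z = s ++ m ++ sᴿ` with `|m| ≤ 1`. The conjugates of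
`σ²` by `s` and by `s ++ m` have the shapes `a ↦ m ++ q'_a` and `a ↦ q'_a ++ m`, and all their
images start with the first letter of `m ++ sᴿ`, resp. of `sᴿ`, so they have fixed points.
Conjugating `σ` itself would not do: for `|p| = 1`, `a ↦ q_a ++ p` may have no fixed point.
The shape `σ a = q a ++ p` is conjugate by `p` to `a ↦ p ++ q a`.
-/

section Morphisms

variable {A B : α → List α}

lemma morphIter_one (A : α → List α) (a : α) : morphIter A 1 a = A a := by
  simp [morphIter]

lemma flatMap_morphIter_succ (A : α → List α) (n : ℕ) (w : List α) :
    w.flatMap (morphIter A (n + 1)) = (w.flatMap A).flatMap (morphIter A n) := by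
  simp only [List.flatMap_assoc, morphIter]

lemma morphIter_add (A : α → List α) (m n : ℕ) (a : α) :
    morphIter A (m + n) a = (morphIter A m a).flatMap (morphIter A n) := by
  induction m generalizing a with
  | zero => simp [morphIter]
  | succ m ih =>
    rw [Nat.add_right_comm, morphIter, morphIter, List.flatMap_assoc]
    exact congrArg (List.flatMap · _) (funext ih)

lemma morphIter_succ' (A : α → List α) (n : ℕ) (a : α) :
    morphIter A (n + 1) a = (morphIter A n a).flatMap A := by
  rw [morphIter_add]
  exact congrArg (List.flatMap · _) (funext (morphIter_one A))

lemma morphIter_morphIter (A : α → List α) (j n : ℕ) (a : α) :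
    morphIter (morphIter A j) n a = morphIter A (j * n) a := by
  induction n generalizing a with
  | zero => rfl
  | succ n ih =>
    rw [morphIter, Nat.mul_succ, Nat.add_comm, morphIter_add]
    exact congrArg (List.flatMap · _) (funext ih)

lemma length_mul_le_length_flatMap {n : ℕ} (h : ∀ a, n ≤ (A a).length) (w : List α) :
    w.length * n ≤ (w.flatMap A).length := by
  induction w with
  | nil => simp
  | cons a w ih =>
    simp only [List.length_cons, List.flatMap_cons, List.length_append]
    nlinarith [h a]

lemma length_le_length_flatMap (h : ∀ a, A a ≠ []) (w : List α) :
    w.length ≤ (w.flatMap A).length := by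
  simpa using length_mul_le_length_flatMap (n := 1) (fun a => List.length_pos_iff.2 (h a)) w

lemma morphIter_ne_nil (h : ∀ a, A a ≠ []) (n : ℕ) (a : α) : morphIter A n a ≠ [] := by
  induction n with
  | zero => simp [morphIter]
  | succ n ih =>
    rw [morphIter_succ', ← List.length_pos_iff]
    exact (List.length_pos_iff.2 ih).trans_le (length_le_length_flatMap h _)

lemma mem_morphIter_congr (h : ∀ a b, b ∈ B a ↔ b ∈ A a) (n : ℕ) (a b : α) :
    b ∈ morphIter B n a ↔ b ∈ morphIter A n a := by
  induction n generalizing a with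
  | zero => rfl
  | succ n ih => simp only [morphIter, List.mem_flatMap, h, ih]

lemma isPrimitive_congr (h : ∀ a b, b ∈ B a ↔ b ∈ A a) : IsPrimitive B ↔ IsPrimitive A := by
  simp only [IsPrimitive, mem_morphIter_congr h]

namespace IsPrimitive

variable (hA : IsPrimitive A)
include hA

lemma ne_nil (a : α) : A a ≠ [] := by
  obtain ⟨k, hk, hmem⟩ := hA
  obtain ⟨k, rfl⟩ := Nat.exists_eq_add_of_le' hk
  intro h
  simpa [morphIter, h] using hmem a a

lemma iterate (j : ℕ) (hj : 1 ≤ j) : IsPrimitive (morphIter A j) := by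
  have hne := hA.ne_nil
  obtain ⟨k, hk, hmem⟩ := hA
  refine ⟨k, hk, fun a b => ?_⟩
  obtain ⟨i, rfl⟩ := Nat.exists_eq_add_of_le hj
  rw [morphIter_morphIter, Nat.add_mul, Nat.one_mul, Nat.add_comm, morphIter_add]
  obtain ⟨c, hc⟩ := List.exists_mem_of_ne_nil _ (morphIter_ne_nil hne (i * k) a)
  exact List.mem_flatMap.2 ⟨c, hc, hmem c b⟩

lemma exists_le_length_morphIter [Nontrivial α] (a : α) (L : ℕ) :
    ∃ N, L ≤ (morphIter A N a).length := by
  obtain ⟨k, hk, hmem⟩ := hA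
  obtain ⟨b, c, hbc⟩ := exists_pair_ne α
  have htwo : ∀ a, 2 ≤ (morphIter A k a).length := fun a => by
    match morphIter A k a, hmem a b, hmem a c with
    | [], hb, _ => simp at hb
    | [d], hb, hc => simp_all
    | _ :: _ :: _, _, _ => simp
  suffices ∀ n a, n + 1 ≤ (morphIter A (k * n) a).length from ⟨k * L, by linarith [this L a]⟩
  intro n
  induction n with
  | zero => simp [morphIter]
  | succ n ih =>
    intro a
    rw [show k * (n + 1) = k + k * n by ring, morphIter_add]
    have := length_mul_le_length_flatMap ih (morphIter A k a)
    nlinarith [htwo a]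

end IsPrimitive

end Morphisms

section Factors

variable {A : α → List α} {u : ℕ → α} {t w : List α}

@[simp] lemma length_seqPrefix (u : ℕ → α) (n : ℕ) : (seqPrefix u n).length = n := by
  simp [seqPrefix]

@[simp] lemma length_factorAt (u : ℕ → α) (i k : ℕ) : (factorAt u i k).length = k := by
  simp [factorAt]

lemma seqPrefix_add (u : ℕ → α) (i k : ℕ) :
    seqPrefix u (i + k) = seqPrefix u i ++ factorAt u i k := by
  simp [seqPrefix, factorAt, List.range_add]

lemma seqPrefix_succ (u : ℕ → α) (n : ℕ) : seqPrefix u (n + 1) = seqPrefix u n ++ [u n] := by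
  simp [seqPrefix_add, factorAt]

lemma seqPrefix_prefix_of_le {m n : ℕ} (h : m ≤ n) : seqPrefix u m <+: seqPrefix u n := by
  obtain ⟨k, rfl⟩ := Nat.exists_eq_add_of_le h
  rw [seqPrefix_add]
  exact List.prefix_append _ _

lemma eq_seqPrefix_of_prefix {n : ℕ} (h : w <+: seqPrefix u n) : w = seqPrefix u w.length := by
  have hw : w.length ≤ n := by simpa using h.length_le
  refine (List.prefix_of_prefix_length_le h (seqPrefix_prefix_of_le hw) (by simp)).eq_of_length ?_
  simp

lemma isFactor_iff : IsFactor u t ↔ ∃ n, t <:+: seqPrefix u n := by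
  constructor
  · rintro ⟨i, ht⟩
    refine ⟨i + t.length, ?_⟩
    rw [seqPrefix_add, ← ht]
    exact (List.suffix_append _ _).isInfix
  · rintro ⟨n, s, r, h⟩
    have hst : s ++ t = seqPrefix u (s.length + t.length) := by
      simpa using eq_seqPrefix_of_prefix ⟨r, h⟩
    rw [seqPrefix_add] at hst
    exact ⟨s.length, (List.append_inj hst (by simp)).2⟩

lemma IsFactor.of_infix (h : IsFactor u w) (ht : t <:+: w) : IsFactor u t := by
  obtain ⟨n, hn⟩ := isFactor_iff.1 h
  exact isFactor_iff.2 ⟨n, ht.trans hn⟩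

lemma isFactor_seqPrefix (u : ℕ → α) (n : ℕ) : IsFactor u (seqPrefix u n) :=
  isFactor_iff.2 ⟨n, List.infix_refl _⟩

lemma isFixedPointOf_iff :
    IsFixedPointOf A u ↔ ∀ n, ∃ m, (seqPrefix u n).flatMap A = seqPrefix u m := by
  have hsubst : ∀ n, substPrefix A u n = (seqPrefix u n).flatMap A := fun n => by
    simp [substPrefix, seqPrefix, List.flatMap_map]
  refine ⟨fun h n => ⟨_, (hsubst n).symm.trans (h n)⟩, fun h n => ?_⟩
  obtain ⟨m, hm⟩ := h n
  rw [hsubst, hm, length_seqPrefix]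

namespace IsFixedPointOf

variable (hu : IsFixedPointOf A u)
include hu

lemma iterate (n : ℕ) : IsFixedPointOf (morphIter A n) u := by
  induction n with
  | zero => exact isFixedPointOf_iff.2 fun m => ⟨m, by simp [morphIter]⟩
  | succ n ih =>
    refine isFixedPointOf_iff.2 fun m => ?_
    obtain ⟨m', hm'⟩ := isFixedPointOf_iff.1 hu m
    rw [flatMap_morphIter_succ, hm']
    exact isFixedPointOf_iff.1 ih m'

lemma isFactor_flatMap (h : IsFactor u w) : IsFactor u (w.flatMap A) := by
  obtain ⟨n, s, r, hn⟩ := isFactor_iff.1 h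
  obtain ⟨m, hm⟩ := isFixedPointOf_iff.1 hu n
  refine isFactor_iff.2 ⟨m, s.flatMap A, r.flatMap A, ?_⟩
  rw [← hm, ← hn]
  simp

lemma exists_infix_morphIter [Nontrivial α] (hA : IsPrimitive A) (h : IsFactor u t) :
    ∃ N, t <:+: morphIter A N (u 0) := by
  obtain ⟨n, hn⟩ := isFactor_iff.1 h
  obtain ⟨N, hN⟩ := hA.exists_le_length_morphIter (u 0) n
  obtain ⟨m, hm⟩ := isFixedPointOf_iff.1 (hu.iterate N) 1
  have hm' : morphIter A N (u 0) = seqPrefix u m := by simpa [seqPrefix] using hm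
  refine ⟨N, hn.trans (List.IsPrefix.isInfix ?_)⟩
  rw [hm'] at hN ⊢
  exact seqPrefix_prefix_of_le (by simpa using hN)

lemma exists_isFactor_around (hA : IsPrimitive A) (a : α) (L : ℕ) :
    ∃ x y, L ≤ x.length ∧ L ≤ y.length ∧ IsFactor u (x ++ a :: y) := by
  have hne := hA.ne_nil
  obtain ⟨k, -, hmem⟩ := hA
  have hk : ∀ b, morphIter A k b ≠ [] := morphIter_ne_nil hne k
  obtain ⟨r, r', hr⟩ := List.append_of_mem (hmem (u L) a)
  have hfac := (hu.iterate k).isFactor_flatMap (isFactor_seqPrefix u (L + 1 + L))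
  rw [seqPrefix_add, seqPrefix_succ] at hfac
  refine ⟨(seqPrefix u L).flatMap (morphIter A k) ++ r,
    r' ++ (factorAt u (L + 1) L).flatMap (morphIter A k), ?_, ?_, ?_⟩
  · have := length_le_length_flatMap hk (seqPrefix u L)
    simp only [List.length_append, length_seqPrefix] at this ⊢
    omega
  · have := length_le_length_flatMap hk (factorAt u (L + 1) L)
    simp only [List.length_append, length_factorAt] at this ⊢
    omega
  · simpa [hr] using hfac

end IsFixedPointOf

end Factors

section FixedPoint

variable {B : α → List α} {c : α} {w : List α}

lemma exists_isFixedPointOf_of_eq_cons (hB : ∀ a, B a ≠ []) (hc : B c = c :: w)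
    (hw : w ≠ []) : ∃ v, IsFixedPointOf B v := by
  have hstep : ∀ n, morphIter B (n + 1) c = morphIter B n c ++ w.flatMap (morphIter B n) :=
    fun n => by simp [morphIter, hc]
  have hlen : ∀ n, n + 1 ≤ (morphIter B n c).length := fun n => by
    induction n with
    | zero => simp [morphIter]
    | succ n ih =>
      have := length_le_length_flatMap (morphIter_ne_nil hB n) w
      have := List.length_pos_iff.2 hw
      rw [hstep, List.length_append]
      omega
  have hmono : ∀ m n, m ≤ n → morphIter B m c <+: morphIter B n c := fun m n hmn => by
    induction n, hmn using Nat.le_induction with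
    | base => exact List.prefix_rfl
    | succ n _ ih => exact ih.trans (hstep n ▸ List.prefix_append _ _)
  set v : ℕ → α := fun n => (morphIter B (n + 1) c).getD n c
  have hpre : ∀ N, morphIter B N c = seqPrefix v (morphIter B N c).length := fun N => by
    refine List.ext_getElem (by simp) fun i h₁ h₂ => ?_
    have hi : i < (morphIter B (i + 1) c).length := by linarith [hlen (i + 1)]
    simp only [seqPrefix, List.getElem_map, List.getElem_range, v, List.getD_eq_getElem _ _ hi]
    rw [(hmono N (N + i + 1) (by omega)).getElem h₁,
      (hmono (i + 1) (N + i + 1) (by omega)).getElem hi]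
  refine ⟨v, isFixedPointOf_iff.2 fun n =>
    ⟨_, eq_seqPrefix_of_prefix (n := (morphIter B (n + 1) c).length) ?_⟩⟩
  rw [← hpre, morphIter_succ']
  refine List.IsPrefix.flatMap ?_ B
  rw [hpre n]
  exact seqPrefix_prefix_of_le (by linarith [hlen n])

lemma IsPrimitive.exists_isFixedPointOf [Nontrivial α] (hB : IsPrimitive B)
    (hc : B c = c :: w) : ∃ v, IsFixedPointOf B v := by
  refine exists_isFixedPointOf_of_eq_cons hB.ne_nil hc ?_
  rintro rfl
  obtain ⟨k, -, hmem⟩ := hB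
  have hconst : ∀ n, morphIter B n c = [c] := fun n => by
    induction n with
    | zero => rfl
    | succ n ih => rw [morphIter_succ', ih]; simp [hc]
  obtain ⟨b, hb⟩ := exists_ne c
  simpa [hconst, hb] using hmem c b

end FixedPoint

section Conjugation

variable {A B : α → List α} {z : List α}

lemma conj_flatMap (hc : ∀ a, z ++ B a = A a ++ z) (w : List α) :
    z ++ w.flatMap B = w.flatMap A ++ z := by
  induction w with
  | nil => simp
  | cons a w ih =>
    rw [List.flatMap_cons, List.flatMap_cons, ← List.append_assoc, hc, List.append_assoc, ih,
      List.append_assoc]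

lemma mem_iff_of_conj (hc : ∀ a, z ++ B a = A a ++ z) (a b : α) : b ∈ B a ↔ b ∈ A a :=
  ((List.perm_append_left_iff z).1 (hc a ▸ List.perm_append_comm)).mem_iff

lemma exists_conj_morphIter (hc : ∀ a, z ++ B a = A a ++ z) (n : ℕ) :
    ∃ z', ∀ a, z' ++ morphIter B n a = morphIter A n a ++ z' := by
  induction n with
  | zero => exact ⟨[], fun a => by simp [morphIter]⟩
  | succ n ih =>
    obtain ⟨z', hz'⟩ := ih
    refine ⟨z.flatMap (morphIter A n) ++ z', fun a => ?_⟩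
    rw [morphIter, morphIter, List.append_assoc, conj_flatMap hz', ← List.append_assoc,
      ← List.flatMap_append, hc, List.flatMap_append, List.append_assoc]

lemma infix_flatMap_cons_of_conj (hc : ∀ a, z ++ B a = A a ++ z) {y : List α}
    (hy : z.length ≤ (y.flatMap A).length) (a : α) : B a <:+: (a :: y).flatMap A := by
  have hz : z <+: y.flatMap A :=
    List.prefix_of_prefix_length_le ⟨_, conj_flatMap hc y⟩ (List.prefix_append _ _) hy
  obtain ⟨r, hr⟩ := hz
  refine ⟨z, r, ?_⟩
  rw [hc, List.flatMap_cons, ← hr, List.append_assoc]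

lemma infix_flatMap_append_of_conj (hc : ∀ a, z ++ B a = A a ++ z) {x : List α}
    (hx : z.length ≤ (x.flatMap B).length) (a : α) : A a <:+: (x ++ [a]).flatMap B := by
  have hz : z <:+ x.flatMap B :=
    List.suffix_of_suffix_length_le (by rw [conj_flatMap hc x]; exact List.suffix_append _ _)
      (List.suffix_append _ _) hx
  obtain ⟨r, hr⟩ := hz
  refine ⟨r, z, ?_⟩
  rw [List.append_assoc, ← hc, List.flatMap_append, ← hr]
  simp

theorem isFactor_iff_of_conj [Nontrivial α] {u v : ℕ → α}
    (hc : ∀ a, z ++ B a = A a ++ z) (hA : IsPrimitive A) (hB : IsPrimitive B)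
    (hu : IsFixedPointOf A u) (hv : IsFixedPointOf B v) (t : List α) :
    IsFactor v t ↔ IsFactor u t := by
  constructor
  · intro ht
    obtain ⟨N, hN⟩ := hv.exists_infix_morphIter hB ht
    obtain ⟨z', hz'⟩ := exists_conj_morphIter hc N
    obtain ⟨x, y, -, hy, hfac⟩ := hu.exists_isFactor_around hA (v 0) z'.length
    have hyN := length_le_length_flatMap (morphIter_ne_nil hA.ne_nil N) y
    have hfac' : IsFactor u (v 0 :: y) := hfac.of_infix (List.suffix_append x _).isInfix
    exact ((hu.iterate N).isFactor_flatMap hfac').of_infix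
      (hN.trans (infix_flatMap_cons_of_conj hz' (hy.trans hyN) _))
  · intro ht
    obtain ⟨N, hN⟩ := hu.exists_infix_morphIter hA ht
    obtain ⟨z', hz'⟩ := exists_conj_morphIter hc N
    obtain ⟨x, y, hx, -, hfac⟩ := hv.exists_isFactor_around hB (u 0) z'.length
    have hxN := length_le_length_flatMap (morphIter_ne_nil hB.ne_nil N) x
    have hfac' : IsFactor v (x ++ [u 0]) := hfac.of_infix ⟨[], y, by simp⟩
    exact ((hv.iterate N).isFactor_flatMap hfac').of_infix
      (hN.trans (infix_flatMap_append_of_conj hz' (hx.trans hxN) _))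

end Conjugation

section Palindromes

variable {m s w x y : List α}

lemma isPalindrome_of_length_le_one (h : w.length ≤ 1) : IsPalindrome w := by
  match w, h with
  | [], _ => rfl
  | [_], _ => rfl

lemma isPalindrome_of_subsingleton [Subsingleton α] (w : List α) : IsPalindrome w :=
  List.ext_getElem (by simp) fun _ _ _ => Subsingleton.elim _ _

lemma IsPalindrome.exists_eq_append_append_reverse (h : IsPalindrome w) :
    ∃ s m, m.length ≤ 1 ∧ w = s ++ m ++ s.reverse := by
  have hw := List.Palindrome.of_reverse_eq h
  clear h
  induction hw with
  | nil => exact ⟨[], [], by simp, rfl⟩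
  | singleton a => exact ⟨[], [a], by simp, rfl⟩
  | cons_concat a _ ih =>
    obtain ⟨s, m, hm, rfl⟩ := ih
    exact ⟨a :: s, m, hm, by simp⟩

lemma exists_isPalindrome_of_append_eq (h : y ++ m = m ++ y.reverse) (hm : m.length ≤ 1)
    (hy : y ≠ []) : ∃ q, IsPalindrome q ∧ y = m ++ q := by
  match m, hm, y, hy with
  | [], _, y, _ => exact ⟨y, by simpa [IsPalindrome, eq_comm] using h, rfl⟩
  | [d], _, e :: y', _ =>
    simp only [List.cons_append, List.reverse_cons, List.cons.injEq, List.nil_append] at h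
    obtain ⟨rfl, h⟩ := h
    exact ⟨y', ((List.append_left_inj _).1 h).symm, rfl⟩

end Palindromes

section PalindromicConjugates

variable {m s x y : List α}

lemma exists_conj_of_isPalindrome_append (hm : IsPalindrome m)
    (hW : IsPalindrome (x ++ (s ++ m ++ s.reverse))) :
    ∃ y, x ++ s = s ++ y ∧ y ++ (m ++ s.reverse) = m ++ s.reverse ++ x.reverse := by
  have hm' : m.reverse = m := hm
  have hW' : s ++ (m ++ s.reverse ++ x.reverse) = x ++ s ++ (m ++ s.reverse) := by
    have : (x ++ (s ++ m ++ s.reverse)).reverse = _ := hW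
    simpa [hm'] using this
  obtain ⟨y, hy⟩ : s <+: x ++ s :=
    List.prefix_of_prefix_length_le (hW' ▸ List.prefix_append _ _) (List.prefix_append _ _)
      (by simp)
  refine ⟨y, hy.symm, ?_⟩
  rw [← hy] at hW'
  simp only [List.append_assoc] at hW' ⊢
  exact ((List.append_right_inj s).1 hW').symm

lemma exists_eq_cons_of_append_eq {l r t t' : List α} {d : α} (h : l ++ t = d :: r ++ t')
    (hl : l ≠ []) : ∃ w, l = d :: w := by
  obtain ⟨e, w, rfl⟩ := List.exists_cons_of_ne_nil hl
  simp only [List.cons_append, List.cons.injEq] at h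
  exact ⟨w, by rw [h.1]⟩

variable {A : α → List α} (hA : ∀ a, A a ≠ []) (hs : s ≠ []) (hm : m.length ≤ 1)
  (hW : ∀ a, IsPalindrome (A a ++ (s ++ m ++ s.reverse)))
include hA hs hm hW

lemma exists_conj_classP_left : ∃ τ : α → List α, (∀ a, s ++ τ a = A a ++ s) ∧
    (∃ d w, τ d = d :: w) ∧ ∀ a, ∃ q, IsPalindrome q ∧ τ a = m ++ q := by
  choose y hy₁ hy₂ using fun a =>
    exists_conj_of_isPalindrome_append (isPalindrome_of_length_le_one hm) (hW a)
  have hy : ∀ a, y a ≠ [] := fun a h => hA a (by simpa [h] using hy₁ a)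
  obtain ⟨d, r, hdr⟩ := List.exists_cons_of_ne_nil (l := m ++ s.reverse) (by simp [hs])
  obtain ⟨w, hw⟩ := exists_eq_cons_of_append_eq (hdr ▸ hy₂ d) (hy d)
  refine ⟨y, fun a => (hy₁ a).symm, ⟨d, w, hw⟩, fun a =>
    exists_isPalindrome_of_append_eq ?_ hm (hy a)⟩
  have hm' : m.reverse = m := isPalindrome_of_length_le_one hm
  have h := congrArg List.reverse (hy₂ a)
  simp only [List.reverse_append, List.reverse_reverse, hm'] at h
  rw [← List.append_assoc, hy₁ a] at h
  simp only [List.append_assoc] at h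
  exact ((List.append_right_inj s).1 h).symm

lemma exists_conj_classP_right : ∃ τ : α → List α, (∀ a, s ++ m ++ τ a = A a ++ (s ++ m)) ∧
    (∃ d w, τ d = d :: w) ∧ ∀ a, ∃ q, IsPalindrome q ∧ τ a = q ++ m := by
  obtain ⟨τ, hτ, -, hform⟩ := exists_conj_classP_left hA hs hm hW
  choose q hq hτq using hform
  have hτ' : ∀ a, (τ a).reverse = q a ++ m := fun a => by
    rw [hτq, List.reverse_append, hq, isPalindrome_of_length_le_one hm]
  obtain ⟨d, r, hdr⟩ := List.exists_cons_of_ne_nil (l := s.reverse) (by simp [hs])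
  have hd := congrArg List.reverse (hτ d)
  simp only [List.reverse_append, hdr] at hd
  have hτne : τ d ≠ [] := fun h => hA d (by simpa [h] using hτ d)
  obtain ⟨w, hw⟩ := exists_eq_cons_of_append_eq hd (by simpa using hτne)
  refine ⟨fun a => (τ a).reverse, fun a => ?_, ⟨d, w, hw⟩, fun a => ⟨q a, hq a, hτ' a⟩⟩
  change s ++ m ++ (τ a).reverse = _
  rw [hτ', ← List.append_assoc, List.append_assoc s m, ← hτq, hτ, List.append_assoc]

end PalindromicConjugates

/-- `join` is `(· ++ ·)` or `fun p' q' => q' ++ p'`, for the two shapes of class P. -/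
def HasShortClassPModel (join : List α → List α → List α) (u : ℕ → α) : Prop :=
  ∃ (τ : α → List α) (p' : List α), IsPrimitive τ ∧ IsPalindrome p' ∧ p'.length ≤ 1 ∧
    (∀ a, ∃ q', IsPalindrome q' ∧ τ a = join p' q') ∧
    ∃ v : ℕ → α, IsFixedPointOf τ v ∧ ∀ t : List α, IsFactor v t ↔ IsFactor u t

section Models

variable {join : List α → List α → List α} {u : ℕ → α}

lemma HasShortClassPModel.congr {u' : ℕ → α} (h : HasShortClassPModel join u')
    (hu : ∀ t, IsFactor u' t ↔ IsFactor u t) : HasShortClassPModel join u := by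
  obtain ⟨τ, p', hτ, hp', hlen, hform, v, hv, hvu⟩ := h
  exact ⟨τ, p', hτ, hp', hlen, hform, v, hv, fun t => (hvu t).trans (hu t)⟩

lemma hasShortClassPModel_of_isPalindrome {σ : α → List α} (hσ : IsPrimitive σ)
    (hu : IsFixedPointOf σ u) (hpal : ∀ a, IsPalindrome (σ a)) (hjoin : ∀ q, join [] q = q) :
    HasShortClassPModel join u :=
  ⟨σ, [], hσ, rfl, by simp, fun a => ⟨σ a, hpal a, (hjoin _).symm⟩, u, hu, fun _ => Iff.rfl⟩

lemma hasShortClassPModel_of_conj [Nontrivial α] {A τ : α → List α} {z w p' : List α} {d : α}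
    (hc : ∀ a, z ++ τ a = A a ++ z) (hA : IsPrimitive A) (hu : IsFixedPointOf A u)
    (hd : τ d = d :: w) (hp' : p'.length ≤ 1)
    (hform : ∀ a, ∃ q', IsPalindrome q' ∧ τ a = join p' q') : HasShortClassPModel join u := by
  have hτ : IsPrimitive τ := (isPrimitive_congr (mem_iff_of_conj hc)).2 hA
  obtain ⟨v, hv⟩ := hτ.exists_isFixedPointOf hd
  exact ⟨τ, p', hτ, isPalindrome_of_length_le_one hp', hp', hform, v, hv,
    isFactor_iff_of_conj hc hA hτ hu hv⟩

end Models

section ClassP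

variable {u : ℕ → α} {σ : α → List α} {p : List α} {q : α → List α}

lemma isPalindrome_flatMap_append (hp : IsPalindrome p) (hq : ∀ a, IsPalindrome (q a))
    (hσq : ∀ a, σ a = p ++ q a) {w : List α} (hw : IsPalindrome w) :
    IsPalindrome (w.flatMap σ ++ p) := by
  have hrev : List.reverse ∘ σ = fun a => q a ++ p := funext fun a => by
    simp only [Function.comp, hσq, List.reverse_append, show p.reverse = p from hp,
      show (q a).reverse = q a from hq a]
  show (_ : List α).reverse = _
  rw [List.reverse_append, List.reverse_flatMap, hw, hp, hrev]
  exact conj_flatMap (fun a => by rw [hσq, List.append_assoc]) w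

theorem hasShortClassPModel_of_eq_append_left [Nontrivial α] (hσ : IsPrimitive σ)
    (hu : IsFixedPointOf σ u) (hp : IsPalindrome p) (hq : ∀ a, IsPalindrome (q a))
    (hσq : ∀ a, σ a = p ++ q a) (hp0 : p ≠ []) :
    HasShortClassPModel (· ++ ·) u ∧ HasShortClassPModel (fun p' q' => q' ++ p') u := by
  have hA := hσ.iterate 2 (by norm_num)
  have hW : ∀ a, IsPalindrome (morphIter σ 2 a ++ (p.flatMap σ ++ p)) := fun a => by
    have hap : IsPalindrome (σ a ++ p) := by
      show (_ : List α).reverse = _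
      simp [hσq, show p.reverse = p from hp, show (q a).reverse = q a from hq a]
    simpa [morphIter, List.flatMap_singleton'] using isPalindrome_flatMap_append hp hq hσq hap
  obtain ⟨s, m, hm, hsm⟩ :=
    (isPalindrome_flatMap_append hp hq hσq hp).exists_eq_append_append_reverse
  have hs : s ≠ [] := by
    rintro rfl
    have := length_le_length_flatMap hσ.ne_nil p
    have := List.length_pos_iff.2 hp0
    have := congrArg List.length hsm
    simp only [List.length_append, List.nil_append, List.reverse_nil, List.append_nil] at *
    omega
  rw [hsm] at hW
  obtain ⟨τ, hτ, ⟨d, w, hd⟩, hform⟩ := exists_conj_classP_left hA.ne_nil hs hm hW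
  obtain ⟨τ', hτ', ⟨d', w', hd'⟩, hform'⟩ := exists_conj_classP_right hA.ne_nil hs hm hW
  exact ⟨hasShortClassPModel_of_conj hτ hA (hu.iterate 2) hd hm hform,
    hasShortClassPModel_of_conj hτ' hA (hu.iterate 2) hd' hm hform'⟩

theorem hasShortClassPModel_of_eq_append_right [Nontrivial α] (hσ : IsPrimitive σ)
    (hu : IsFixedPointOf σ u) (hp : IsPalindrome p) (hq : ∀ a, IsPalindrome (q a))
    (hσq : ∀ a, σ a = q a ++ p) (hp0 : p ≠ []) :
    HasShortClassPModel (· ++ ·) u ∧ HasShortClassPModel (fun p' q' => q' ++ p') u := by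
  set σ' : α → List α := fun a => p ++ q a
  have hc : ∀ a, p ++ σ a = σ' a ++ p := fun a => by simp [hσq, σ']
  have hσ' : IsPrimitive σ' := (isPrimitive_congr (mem_iff_of_conj hc)).1 hσ
  obtain ⟨d, r, rfl⟩ := List.exists_cons_of_ne_nil hp0
  obtain ⟨u', hu'⟩ := hσ'.exists_isFixedPointOf (c := d) (w := r ++ q d) rfl
  have hfac := isFactor_iff_of_conj hc hσ' hσ hu' hu
  obtain ⟨h₁, h₂⟩ := hasShortClassPModel_of_eq_append_left hσ' hu' hp hq (fun _ => rfl) hp0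
  exact ⟨h₁.congr fun t => (hfac t).symm, h₂.congr fun t => (hfac t).symm⟩

end ClassP

theorem stmt16_general {α : Type*} (σ : α → List α) (hprim : IsPrimitive σ)
    (u : ℕ → α) (hfix : IsFixedPointOf σ u) (hP : ClassP σ) :
    (∃ (τ : α → List α) (p' : List α), IsPrimitive τ ∧ IsPalindrome p' ∧
      p'.length ≤ 1 ∧ (∀ a, ∃ q', IsPalindrome q' ∧ τ a = p' ++ q') ∧
      ∃ v : ℕ → α, IsFixedPointOf τ v ∧
        ∀ t : List α, IsFactor v t ↔ IsFactor u t) ∧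
    (∃ (τ : α → List α) (p' : List α), IsPrimitive τ ∧ IsPalindrome p' ∧
      p'.length ≤ 1 ∧ (∀ a, ∃ q', IsPalindrome q' ∧ τ a = q' ++ p') ∧
      ∃ v : ℕ → α, IsFixedPointOf τ v ∧
        ∀ t : List α, IsFactor v t ↔ IsFactor u t) := by
  have hpal : (∀ a, IsPalindrome (σ a)) →
      HasShortClassPModel (· ++ ·) u ∧ HasShortClassPModel (fun p' q' => q' ++ p') u :=
    fun h => ⟨hasShortClassPModel_of_isPalindrome hprim hfix h fun _ => rfl,
      hasShortClassPModel_of_isPalindrome hprim hfix h List.append_nil⟩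
  rcases subsingleton_or_nontrivial α with hα | hα
  · exact hpal fun a => isPalindrome_of_subsingleton _
  obtain ⟨p, hp, hleft | hright⟩ := hP
  · choose q hq hσq using hleft
    obtain rfl | hp0 := eq_or_ne p []
    · exact hpal fun a => by simpa [hσq] using hq a
    · exact hasShortClassPModel_of_eq_append_left hprim hfix hp hq hσq hp0
  · choose q hq hσq using hright
    obtain rfl | hp0 := eq_or_ne p []
    · exact hpal fun a => by simpa [hσq] using hq a
    · exact hasShortClassPModel_of_eq_append_right hprim hfix hp hq hσq hp0

/-- If `u` is a fixed point of a primitive class-P morphism, then there is a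
primitive class-P morphism `τ`, whose class-P palindrome `p'` has length `0`
or `1`, with a fixed point `v` having exactly the same factors as `u`;
moreover `τ` can be chosen of either form `a → p' q'_a` or `a → q'_a p'`. -/
theorem stmt16 {α : Type*} [Fintype α] (σ : α → List α) (hprim : IsPrimitive σ)
    (u : ℕ → α) (hfix : IsFixedPointOf σ u) (hP : ClassP σ) :
    (∃ (τ : α → List α) (p' : List α), IsPrimitive τ ∧ IsPalindrome p' ∧
      p'.length ≤ 1 ∧ (∀ a, ∃ q', IsPalindrome q' ∧ τ a = p' ++ q') ∧
      ∃ v : ℕ → α, IsFixedPointOf τ v ∧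
        ∀ t : List α, IsFactor v t ↔ IsFactor u t) ∧
    (∃ (τ : α → List α) (p' : List α), IsPrimitive τ ∧ IsPalindrome p' ∧
      p'.length ≤ 1 ∧ (∀ a, ∃ q', IsPalindrome q' ∧ τ a = q' ++ p') ∧
      ∃ v : ℕ → α, IsFixedPointOf τ v ∧
        ∀ t : List α, IsFactor v t ↔ IsFactor u t) :=
  stmt16_general σ hprim u hfix hP

end PalPaper
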